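/- arXiv:math/0502511 — 2 statements merged into one kernel-verified Lean document; each statement's English description precedes it below -/
import Mathlib

section
/- The polynomial μ_n(x_0, x_1, …, x_n) defined by μ_n(x_0,…,x_n)·∏_{i=1}^n (1-x_i) = ∏_{S ⊆ {1,…,n}, |S| even} (1 - x_0 ∏_{i∈S} x_i) - ∏_{S ⊆ {1,…,n}, |S| odd} (1 - x_0 ∏_{i∈S} x_i) exists; that is, ∏_{i=1}^n (1-x_i) divides the right-hand side in the polynomial ring ℤ[x_0,…,x_n]. -/
open MvPolynomial Finset

namespace Stmt2Aux

noncomputable def phi (n : ℕ) (a : Fin n) :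
    MvPolynomial (Option (Fin n)) ℤ →+* MvPolynomial (Option (Fin n)) ℤ :=
  (aeval (fun o : Option (Fin n) =>
    o.elim (X Option.none * X (Option.some a)) (fun i => X (Option.some i)))).toRingHom

lemma phi_X_none (n : ℕ) (a : Fin n) :
    phi n a (X Option.none) = X Option.none * X (Option.some a) := by
  simp [phi]

lemma phi_X_some (n : ℕ) (a : Fin n) (i : Fin n) :
    phi n a (X (Option.some i)) = X (Option.some i) := by
  simp [phi]

lemma phi_C (n : ℕ) (a : Fin n) (r : ℤ) : phi n a (C r) = C r := by
  simp [phi]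

lemma hom_sub (n : ℕ) (a : Fin n) (f : MvPolynomial (Option (Fin n)) ℤ) :
    (1 - X (Option.some a)) ∣ phi n a f - f := by
  induction f using MvPolynomial.induction_on with
  | C r => rw [phi_C]; simp
  | add p q hp hq =>
      have h : phi n a (p + q) - (p + q) = (phi n a p - p) + (phi n a q - q) := by
        rw [map_add]; ring
      rw [h]; exact dvd_add hp hq
  | mul_X p j hp =>
      have key : phi n a (p * X j) - p * X j
          = (phi n a p - p) * phi n a (X j) + p * (phi n a (X j) - X j) := by
        rw [map_mul]; ring
      rw [key]
      refine dvd_add (hp.mul_right _) (dvd_mul_of_dvd_right ?_ p)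
      cases j with
      | none => rw [phi_X_none]; exact ⟨-X Option.none, by ring⟩
      | some i => rw [phi_X_some]; simp

lemma phi_prod (n : ℕ) (a : Fin n) (T : Finset (Fin n)) :
    phi n a (∏ i ∈ T, (1 - X (Option.some i))) = ∏ i ∈ T, (1 - X (Option.some i)) := by
  rw [map_prod]
  exact Finset.prod_congr rfl fun i _ => by rw [map_sub, map_one, phi_X_some]

lemma phi_factor (n : ℕ) (a : Fin n) (S : Finset (Fin n)) :
    phi n a (1 - X Option.none * ∏ i ∈ S, X (Option.some i))
      = 1 - (X Option.none * X (Option.some a)) * ∏ i ∈ S, X (Option.some i) := by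
  rw [map_sub, map_one, map_mul, phi_X_none, map_prod]
  simp [phi_X_some]

lemma prod_insert_aux {n : ℕ} (a : Fin n) (T : Finset (Fin n)) (ha : a ∉ T)
    (p : ℕ → Prop) [DecidablePred p] (f : Finset (Fin n) → MvPolynomial (Option (Fin n)) ℤ) :
    ∏ S ∈ (insert a T).powerset.filter (fun S => p S.card), f S
      = (∏ S ∈ T.powerset.filter (fun S => p S.card), f S)
        * ∏ S ∈ T.powerset.filter (fun S => p (S.card + 1)), f (insert a S) := by
  have hdisj : Disjoint (T.powerset.filter fun S => p S.card)
      ((T.powerset.image (insert a)).filter fun S => p S.card) := by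
    simp only [Finset.disjoint_left, mem_filter, mem_image, mem_powerset]
    rintro S ⟨hS, -⟩ ⟨⟨S', hS', rfl⟩, -⟩
    exact ha (hS (mem_insert_self a S'))
  rw [Finset.powerset_insert, Finset.filter_union, Finset.prod_union hdisj]
  congr 1
  have himg : (T.powerset.image (insert a)).filter (fun S => p S.card)
      = (T.powerset.filter (fun S => p (S.card + 1))).image (insert a) := by
    rw [Finset.filter_image]
    congr 1
    apply Finset.filter_congr
    intro S hS
    rw [Finset.card_insert_of_notMem (fun h => ha (Finset.mem_powerset.mp hS h))]
  rw [himg]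
  apply Finset.prod_image
  intro x hx y hy h
  have hax : a ∉ x := fun h' => ha (Finset.mem_powerset.mp (Finset.mem_filter.mp hx).1 h')
  have hay : a ∉ y := fun h' => ha (Finset.mem_powerset.mp (Finset.mem_filter.mp hy).1 h')
  rw [← Finset.erase_insert hax, ← Finset.erase_insert hay, h]

lemma A_insert {n : ℕ} (a : Fin n) (T : Finset (Fin n)) (ha : a ∉ T) :
    ∏ S ∈ (insert a T).powerset.filter (fun S => Even S.card),
        (1 - X Option.none * ∏ i ∈ S, (X (Option.some i) : MvPolynomial (Option (Fin n)) ℤ))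
      = (∏ S ∈ T.powerset.filter (fun S => Even S.card),
          (1 - X Option.none * ∏ i ∈ S, X (Option.some i)))
        * phi n a (∏ S ∈ T.powerset.filter (fun S => Odd S.card),
          (1 - X Option.none * ∏ i ∈ S, X (Option.some i))) := by
  rw [prod_insert_aux a T ha Even _]
  congr 1
  have hfil : T.powerset.filter (fun S => Even (S.card + 1))
      = T.powerset.filter (fun S => Odd S.card) := by
    apply Finset.filter_congr
    intro S hS
    rw [Nat.even_add_one, Nat.not_even_iff_odd]
  rw [hfil, map_prod]
  apply Finset.prod_congr rfl
  intro S hS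
  have haS : a ∉ S := fun h' => ha (Finset.mem_powerset.mp (Finset.mem_filter.mp hS).1 h')
  rw [phi_factor, Finset.prod_insert haS]
  ring

lemma B_insert {n : ℕ} (a : Fin n) (T : Finset (Fin n)) (ha : a ∉ T) :
    ∏ S ∈ (insert a T).powerset.filter (fun S => Odd S.card),
        (1 - X Option.none * ∏ i ∈ S, (X (Option.some i) : MvPolynomial (Option (Fin n)) ℤ))
      = (∏ S ∈ T.powerset.filter (fun S => Odd S.card),
          (1 - X Option.none * ∏ i ∈ S, X (Option.some i)))
        * phi n a (∏ S ∈ T.powerset.filter (fun S => Even S.card),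
          (1 - X Option.none * ∏ i ∈ S, X (Option.some i))) := by
  rw [prod_insert_aux a T ha Odd _]
  congr 1
  have hfil : T.powerset.filter (fun S => Odd (S.card + 1))
      = T.powerset.filter (fun S => Even S.card) := by
    apply Finset.filter_congr
    intro S hS
    rw [Nat.odd_add_one, Nat.not_odd_iff_even]
  rw [hfil, map_prod]
  apply Finset.prod_congr rfl
  intro S hS
  have haS : a ∉ S := fun h' => ha (Finset.mem_powerset.mp (Finset.mem_filter.mp hS).1 h')
  rw [phi_factor, Finset.prod_insert haS]
  ring

lemma main (n : ℕ) (T : Finset (Fin n)) :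
    (∏ i ∈ T, (1 - (X (Option.some i) : MvPolynomial (Option (Fin n)) ℤ))) ∣
      ((∏ S ∈ T.powerset.filter (fun S => Even S.card),
          (1 - X Option.none * ∏ i ∈ S, X (Option.some i))) -
        (∏ S ∈ T.powerset.filter (fun S => Odd S.card),
          (1 - X Option.none * ∏ i ∈ S, X (Option.some i)))) := by
  induction T using Finset.induction_on with
  | empty => simp
  | @insert a T ha IH =>
    obtain ⟨μ, hμ⟩ := IH
    set A := ∏ S ∈ T.powerset.filter (fun S => Even S.card),
        (1 - X Option.none * ∏ i ∈ S, (X (Option.some i) : MvPolynomial (Option (Fin n)) ℤ)) with hA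
    set B := ∏ S ∈ T.powerset.filter (fun S => Odd S.card),
        (1 - X Option.none * ∏ i ∈ S, (X (Option.some i) : MvPolynomial (Option (Fin n)) ℤ)) with hB
    set P := ∏ i ∈ T, (1 - (X (Option.some i) : MvPolynomial (Option (Fin n)) ℤ)) with hP
    obtain ⟨c, hc⟩ := hom_sub n a B
    obtain ⟨d, hd⟩ := hom_sub n a μ
    rw [A_insert a T ha, B_insert a T ha, Finset.prod_insert ha]
    have hphiAB : phi n a A - phi n a B = P * phi n a μ := by
      rw [← map_sub, hμ, map_mul, phi_prod]
    refine ⟨μ * c - B * d, ?_⟩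
    linear_combination (phi n a B) * hμ + (P * μ) * hc - B * hphiAB - (B * P) * hd
  
end Stmt2Aux

theorem stmt2 (n : ℕ) :
    (∏ i : Fin n, (1 - (X (Option.some i) : MvPolynomial (Option (Fin n)) ℤ))) ∣
      ((∏ S ∈ Finset.univ.powerset.filter (fun S : Finset (Fin n) => Even S.card),
          (1 - X Option.none * ∏ i ∈ S, X (Option.some i))) -
        (∏ S ∈ Finset.univ.powerset.filter (fun S : Finset (Fin n) => Odd S.card),
          (1 - X Option.none * ∏ i ∈ S, X (Option.some i)))) := by
  exact Stmt2Aux.main n Finset.univ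
end

section
/- For every n ≥ 1, μ_n(x, 1, …, 1) = ν_n(x), where ν_n(x) = -(1-x)^{2^{n-1}} s_{n-1}(x) with s_0(x)=x/(1-x), s_n(x)=x s_{n-1}'(x), and μ_n is defined by μ_n(x_0,…,x_n)∏_{i=1}^n(1-x_i) = ∏_{|S| even}(1-x_0∏_{i∈S}x_i) - ∏_{|S| odd}(1-x_0∏_{i∈S}x_i). -/
open MvPolynomial Finset

noncomputable def s : ℕ → PowerSeries ℚ
  | 0 => PowerSeries.X * (1 - PowerSeries.X)⁻¹
  | (n + 1) => PowerSeries.X * PowerSeries.derivative ℚ (s n)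

noncomputable def nu (n : ℕ) : PowerSeries ℚ :=
  -((1 - PowerSeries.X) ^ (2 ^ (n - 1)) * s (n - 1))

namespace StmtAux

local notation "PX" => PowerSeries.X
local notation "PC" => PowerSeries.C

abbrev RR : Type := PowerSeries ℚ
abbrev BB : Type := PowerSeries RR

noncomputable def UU : BB := (PC : RR →+* BB) PX
noncomputable def TT : BB := (PC : RR →+* BB) (1 - PX)
noncomputable def iot : RR →+* BB := PowerSeries.map ((PC : ℚ →+* RR))
noncomputable def pii : BB →+* RR := PowerSeries.map (PowerSeries.constantCoeff (R := ℚ))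
noncomputable def sig : BB →+* BB := PowerSeries.rescale (1 - PX)

lemma UU_ne_zero : UU ≠ 0 := by
  intro hh
  have := congrArg (PowerSeries.constantCoeff (R := RR)) hh
  rw [UU, PowerSeries.constantCoeff_C, map_zero] at this
  exact PowerSeries.X_ne_zero this

lemma pii_iot (a : RR) : pii (iot a) = a := by
  ext m
  simp [pii, iot, PowerSeries.coeff_map]

lemma pii_UU : pii UU = 0 := by
  simp [pii, UU, PowerSeries.map_C, PowerSeries.constantCoeff_X]

lemma pii_X : pii PX = PX := by simp [pii, PowerSeries.map_X]

lemma pii_TT : pii TT = 1 := by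
  simp [pii, TT, PowerSeries.map_C, map_sub, PowerSeries.constantCoeff_X]

lemma iot_X : iot PX = PX := by simp [iot, PowerSeries.map_X]

lemma sig_C (r : RR) : sig ((PC : RR →+* BB) r) = (PC : RR →+* BB) r := by
  ext m
  rw [sig, PowerSeries.coeff_rescale, PowerSeries.coeff_C]
  rcases m with _ | m <;> simp [PowerSeries.coeff_C]

lemma sig_UU : sig UU = UU := sig_C _

lemma sig_TT : sig TT = TT := sig_C _

lemma sig_X : sig PX = TT * PX := by
  ext m : 1
  rw [sig, PowerSeries.coeff_rescale, TT, PowerSeries.coeff_C_mul, PowerSeries.coeff_X]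
  rcases m with _ | _ | m <;> simp

lemma pii_sig (f : BB) : pii (sig f) = pii f := by
  ext m
  rw [pii, PowerSeries.coeff_map, PowerSeries.coeff_map, sig, PowerSeries.coeff_rescale,
    map_mul, map_pow]
  simp [PowerSeries.constantCoeff_X]

lemma deriv_map {A B' : Type} [CommRing A] [CommRing B'] (φ : A →+* B') (f : PowerSeries A) :
    PowerSeries.derivative B' (PowerSeries.map φ f) = PowerSeries.map φ (PowerSeries.derivative A f) := by
  ext n
  rw [PowerSeries.coeff_derivative, PowerSeries.coeff_map, PowerSeries.coeff_map,
    PowerSeries.coeff_derivative, map_mul]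
  simp

lemma pii_Xd (f : BB) : pii (PX * PowerSeries.derivative RR f) = PX * PowerSeries.derivative ℚ (pii f) := by
  rw [pii, map_mul, PowerSeries.map_X, deriv_map]

lemma iot_Xd (a : RR) : PX * PowerSeries.derivative RR (iot a) = iot (PX * PowerSeries.derivative ℚ a) := by
  rw [iot, map_mul, PowerSeries.map_X, deriv_map]

noncomputable def kk : ℕ → RR
  | 0 => 0
  | (m + 1) => (m : RR) + (1 - PX) * kk m

lemma hkk (m : ℕ) : ((1 : RR) - PX) ^ m = 1 - (m : RR) * PX + PX ^ 2 * kk m := by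
  induction m with
  | zero => simp [kk]
  | succ p ih =>
      rw [pow_succ, ih, kk]
      push_cast
      ring

lemma sig_eq (f : BB) : ∃ h : BB,
    sig f = f - UU * (PX * PowerSeries.derivative RR f) + UU ^ 2 * h := by
  refine ⟨PowerSeries.mk fun m => kk m * PowerSeries.coeff (R := RR) m f, ?_⟩
  ext m : 1
  have hU2 : (UU : BB) ^ 2 = (PC : RR →+* BB) (PX ^ 2) := by rw [UU, ← map_pow]
  rw [sig, PowerSeries.coeff_rescale, hkk, map_add, map_sub, hU2, UU,
    PowerSeries.coeff_C_mul, PowerSeries.coeff_C_mul, PowerSeries.coeff_mk]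
  rcases m with _ | m
  · simp [kk]
  · rw [PowerSeries.coeff_succ_X_mul, PowerSeries.coeff_derivative]
    push_cast
    ring

lemma exists_U_factor (f : BB) : ∃ r : BB, f = iot (pii f) + UU * r := by
  refine ⟨PowerSeries.mk fun m => PowerSeries.mk fun i =>
    PowerSeries.coeff (R := ℚ) (i + 1) (PowerSeries.coeff (R := RR) m f), ?_⟩
  ext m : 1
  rw [map_add, iot, PowerSeries.coeff_map, pii, PowerSeries.coeff_map, UU,
    PowerSeries.coeff_C_mul, PowerSeries.coeff_mk]
  ext i : 1
  rcases i with _ | i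
  · simp [PowerSeries.coeff_zero_eq_constantCoeff]
  · rw [map_add, PowerSeries.coeff_C, if_neg (Nat.succ_ne_zero i),
      PowerSeries.coeff_succ_X_mul, PowerSeries.coeff_mk]
    simp


noncomputable def aE : ℕ → RR := fun m => if m = 0 then 1 - PX else (1 - PX) ^ (2 ^ (m - 1))
noncomputable def aO : ℕ → RR := fun m => if m = 0 then 1 else (1 - PX) ^ (2 ^ (m - 1))
noncomputable def ww : ℕ → RR := fun m => if m = 0 then -PX else nu m

lemma two_pow_succ' (p : ℕ) : (2:ℕ) ^ (p + 1) = 2 ^ p + 2 ^ p := by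
  rw [pow_succ]; ring

lemma aE_succ (m : ℕ) : aE (m + 1) = aE m * aO m := by
  rcases m with _ | p
  · simp [aE, aO]
  · simp only [aE, aO, if_neg (Nat.succ_ne_zero _), Nat.succ_sub_one]
    rw [two_pow_succ', pow_add]

lemma aO_succ (m : ℕ) : aO (m + 1) = aO m * aE m := by
  rcases m with _ | p
  · simp [aE, aO]
  · simp only [aE, aO, if_neg (Nat.succ_ne_zero _), Nat.succ_sub_one]
    rw [two_pow_succ', pow_add]

lemma ww_succ (m : ℕ) : ww (m + 1) =
    PX * (aO m * PowerSeries.derivative ℚ (ww m) - PowerSeries.derivative ℚ (aO m) * ww m) := by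
  rcases m with _ | p
  · have h1 : ww 1 = -PX := by
      have hc : PowerSeries.constantCoeff (R := ℚ) (1 - PX) ≠ 0 := by
        simp [PowerSeries.constantCoeff_X]
      have : ((1:RR) - PX) * (1 - PX)⁻¹ = 1 := PowerSeries.mul_inv_cancel _ hc
      simp only [ww, nu, s, if_neg one_ne_zero]
      norm_num
      rw [s, mul_comm PX, ← mul_assoc, this, one_mul]
    rw [h1]
    simp [ww, aO]
  · have hα : aO (p + 1) = (1 - PX) ^ (2 ^ p) := by
      simp [aO, Nat.succ_sub_one]
    have hw : ww (p + 1) = -((1 - PX) ^ (2 ^ p) * s p) := by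
      simp [ww, nu, Nat.succ_sub_one]
    have hw2 : ww (p + 2) = -(((1 - PX) ^ (2 ^ p)) ^ 2 * (PX * PowerSeries.derivative ℚ (s p))) := by
      have : ww (p + 2) = -((1 - PX) ^ (2 ^ (p + 1)) * s (p + 1)) := by
        simp [ww, nu, Nat.succ_sub_one]
      rw [this, two_pow_succ', pow_add, ← pow_mul']
      have hs : s (p + 1) = PX * PowerSeries.derivative ℚ (s p) := rfl
      rw [hs]; ring
    rw [hw2, hα, hw, map_neg, Derivation.leibniz, smul_eq_mul, smul_eq_mul]
    ring


noncomputable def Ev {I : Type} (t : Finset I) : BB :=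
  ∏ S ∈ t.powerset.filter (fun S : Finset I => Even S.card), ((1 : BB) - PX * TT ^ S.card)

noncomputable def Od {I : Type} (t : Finset I) : BB :=
  ∏ S ∈ t.powerset.filter (fun S : Finset I => Odd S.card), ((1 : BB) - PX * TT ^ S.card)

lemma sig_factor (k : ℕ) : sig ((1 : BB) - PX * TT ^ k) = 1 - PX * TT ^ (k + 1) := by
  rw [map_sub, map_one, map_mul, map_pow, sig_X, sig_TT, pow_succ]
  ring

lemma prod_insert_filter {I : Type} [DecidableEq I] {a : I} {t : Finset I} (ha : a ∉ t)
    (p : ℕ → Prop) [DecidablePred p] (f : ℕ → BB) :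
    ∏ S ∈ (insert a t).powerset.filter (fun S => p S.card), f S.card
      = (∏ S ∈ t.powerset.filter (fun S => p S.card), f S.card) *
        ∏ S ∈ t.powerset.filter (fun S => p (S.card + 1)), f (S.card + 1) := by
  have hdisj : Disjoint (t.powerset.filter (fun S => p S.card))
      ((Finset.image (insert a) t.powerset).filter (fun S => p S.card)) := by
    refine Finset.disjoint_left.mpr ?_
    intro S hS hS'
    have h1 : a ∉ S := fun haS =>
      ha (Finset.mem_powerset.mp (Finset.mem_filter.mp hS).1 haS)
    obtain ⟨T, _, rfl⟩ := Finset.mem_image.mp (Finset.mem_filter.mp hS').1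
    exact h1 (Finset.mem_insert_self a T)
  rw [Finset.powerset_insert, Finset.filter_union, Finset.prod_union hdisj]
  congr 1
  rw [Finset.filter_image, Finset.prod_image]
  · refine Finset.prod_congr (Finset.filter_congr ?_) ?_
    · intro S hS
      rw [Finset.card_insert_of_notMem
        (fun haS => ha (Finset.mem_powerset.mp hS haS))]
    · intro S hS
      have hS' := Finset.mem_filter.mp hS
      rw [Finset.card_insert_of_notMem
        (fun haS => ha (Finset.mem_powerset.mp hS'.1 haS))]
  · intro S hS T hT hST
    have hSa : a ∉ S := fun haS =>
      ha (Finset.mem_powerset.mp (Finset.mem_filter.mp hS).1 haS)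
    have hTa : a ∉ T := fun haT =>
      ha (Finset.mem_powerset.mp (Finset.mem_filter.mp hT).1 haT)
    have := congrArg (fun W => Finset.erase W a) hST
    simpa [Finset.erase_insert hSa, Finset.erase_insert hTa] using this

lemma Ev_insert {I : Type} [DecidableEq I] {a : I} {t : Finset I} (ha : a ∉ t) :
    Ev (insert a t) = Ev t * sig (Od t) := by
  rw [Ev, prod_insert_filter ha Even (fun k => (1 : BB) - PX * TT ^ k)]
  congr 1
  rw [Od, map_prod]
  refine Finset.prod_congr (Finset.filter_congr ?_) ?_
  · intro S _
    rw [Nat.even_add_one, Nat.not_even_iff_odd]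
  · intro S _
    rw [sig_factor]

lemma Od_insert {I : Type} [DecidableEq I] {a : I} {t : Finset I} (ha : a ∉ t) :
    Od (insert a t) = Od t * sig (Ev t) := by
  rw [Od, prod_insert_filter ha Odd (fun k => (1 : BB) - PX * TT ^ k)]
  congr 1
  rw [Ev, map_prod]
  refine Finset.prod_congr (Finset.filter_congr ?_) ?_
  · intro S _
    rw [Nat.odd_add_one, Nat.not_odd_iff_even]
  · intro S _
    rw [sig_factor]


lemma one_sub_TT : (1 : BB) - TT = UU := by
  rw [TT, UU]
  have h1 : (1 : BB) = (PC : RR →+* BB) 1 := (map_one _).symm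
  rw [h1, ← map_sub]
  congr 1
  ring

lemma key {I : Type} [DecidableEq I] (t : Finset I) :
    pii (Ev t) = aE t.card ∧ pii (Od t) = aO t.card ∧
      ∃ g : BB, Ev t - Od t = iot (ww t.card) * UU ^ t.card + UU ^ (t.card + 1) * g := by
  induction t using Finset.induction_on with
  | empty =>
      have hEv : Ev (∅ : Finset I) = 1 - PX := by
        simp [Ev, Finset.powerset_empty, Finset.filter_singleton]
      have hOd : Od (∅ : Finset I) = 1 := by
        simp [Od, Finset.powerset_empty, Finset.filter_singleton]
      refine ⟨?_, ?_, 0, ?_⟩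
      · rw [hEv, map_sub, map_one, pii_X]
        simp [aE]
      · rw [hOd, map_one]
        simp [aO]
      · rw [hEv, hOd]
        simp only [Finset.card_empty, pow_zero, pow_one, mul_zero, add_zero, mul_one]
        rw [show ww 0 = -PX from by simp [ww], map_neg, iot_X]
        ring
  | @insert a t ha ih =>
      obtain ⟨hE, hO, g, hD⟩ := ih
      have hcard : (insert a t).card = t.card + 1 := Finset.card_insert_of_notMem ha
      rw [hcard, Ev_insert ha, Od_insert ha]
      obtain ⟨h₁, hs₁⟩ := sig_eq (Od t)
      obtain ⟨h₂, hs₂⟩ := sig_eq (iot (ww t.card))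
      obtain ⟨h₃, hs₃⟩ := sig_eq g
      rw [iot_Xd] at hs₂
      obtain ⟨r, hr⟩ := exists_U_factor (Od t * iot (PX * PowerSeries.derivative ℚ (ww t.card))
        - iot (ww t.card) * (PX * PowerSeries.derivative RR (Od t)))
      have hπW : pii (Od t * iot (PX * PowerSeries.derivative ℚ (ww t.card))
          - iot (ww t.card) * (PX * PowerSeries.derivative RR (Od t))) = ww (t.card + 1) := by
        rw [map_sub, pii.map_mul, pii.map_mul, pii_iot, pii_iot, pii_Xd, hO, ww_succ]
        ring
      rw [hπW] at hr
      have hiot : iot (ww (t.card + 1)) = (Od t * iot (PX * PowerSeries.derivative ℚ (ww t.card))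
          - iot (ww t.card) * (PX * PowerSeries.derivative RR (Od t))) - UU * r := by
        rw [hr]; ring
      refine ⟨?_, ?_, (r + iot (ww t.card) * h₁ - g * (PX * PowerSeries.derivative RR (Od t))
        - Od t * h₂ + Od t * (PX * PowerSeries.derivative RR g)
        + UU * (g * h₁ - Od t * h₃)), ?_⟩
      · rw [map_mul, hE, pii_sig, hO, aE_succ]
      · rw [map_mul, hO, pii_sig, hE, aO_succ]
      · have hEv2 : Ev t = Od t + (iot (ww t.card) * UU ^ t.card + UU ^ (t.card + 1) * g) := by
          rw [← hD]; ring
        have hsEv : sig (Ev t) = sig (Od t)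
            + (sig (iot (ww t.card)) * UU ^ t.card + UU ^ (t.card + 1) * sig g) := by
          rw [hEv2, map_add, map_add, map_mul, map_mul, map_pow, map_pow, sig_UU]
        rw [hsEv, hEv2, hs₁, hs₂, hs₃, hiot]
        ring

end StmtAux

/-- The defining identity of `μ_n` in `ℤ[x_0, x_1, …, x_n]`, with variables indexed by
`Option (Fin n)` (`none` playing the role of `x_0`). -/
def muIdentity (n : ℕ) (μ : MvPolynomial (Option (Fin n)) ℤ) : Prop :=
  μ * ∏ i : Fin n, (1 - X (Option.some i)) =
    (∏ S ∈ Finset.univ.powerset.filter (fun S : Finset (Fin n) => Even S.card),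
        (1 - X Option.none * ∏ i ∈ S, X (Option.some i))) -
      (∏ S ∈ Finset.univ.powerset.filter (fun S : Finset (Fin n) => Odd S.card),
        (1 - X Option.none * ∏ i ∈ S, X (Option.some i)))

/-- `μ_n(x, 1, …, 1) = ν_n(x)` for every `n ≥ 1`. -/
theorem stmt5 (n : ℕ) (hn : 1 ≤ n) (μ : MvPolynomial (Option (Fin n)) ℤ)
    (h : muIdentity n μ) :
    MvPolynomial.aeval
      (fun i : Option (Fin n) => i.elim PowerSeries.X (fun _ => (1 : PowerSeries ℚ))) μ =
      nu n := by
  classical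
  obtain ⟨hE, hO, g, hD⟩ := StmtAux.key (Finset.univ : Finset (Fin n))
  rw [Finset.card_univ, Fintype.card_fin] at hD
  set φfun : Option (Fin n) → StmtAux.BB :=
    fun i => i.elim PowerSeries.X (fun _ => StmtAux.TT) with hφfun
  have h1 : MvPolynomial.aeval φfun (∏ i : Fin n, ((1 : MvPolynomial (Option (Fin n)) ℤ) - X (Option.some i))) = StmtAux.UU ^ n := by
    rw [map_prod]
    have hfac : ∀ i : Fin n,
        MvPolynomial.aeval φfun ((1 : MvPolynomial (Option (Fin n)) ℤ) - X (Option.some i)) = StmtAux.UU := by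
      intro i
      rw [map_sub, map_one, MvPolynomial.aeval_X]
      show (1 : StmtAux.BB) - StmtAux.TT = StmtAux.UU
      exact StmtAux.one_sub_TT
    rw [Finset.prod_congr rfl (fun i _ => hfac i), Finset.prod_const, Finset.card_univ,
      Fintype.card_fin]
  have h2 : ∀ (p : ℕ → Prop) (inst : DecidablePred p),
      MvPolynomial.aeval φfun (∏ S ∈ Finset.univ.powerset.filter
          (fun S : Finset (Fin n) => p S.card),
        ((1 : MvPolynomial (Option (Fin n)) ℤ) - X Option.none * ∏ i ∈ S, X (Option.some i)))
      = ∏ S ∈ Finset.univ.powerset.filter (fun S : Finset (Fin n) => p S.card),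
          ((1 : StmtAux.BB) - PowerSeries.X * StmtAux.TT ^ S.card) := by
    intro p inst
    rw [map_prod]
    refine Finset.prod_congr rfl ?_
    intro S hS
    rw [map_sub, map_one, map_mul, MvPolynomial.aeval_X, map_prod]
    have : ∀ i : Fin n, MvPolynomial.aeval φfun
        ((X (Option.some i) : MvPolynomial (Option (Fin n)) ℤ)) = StmtAux.TT := by
      intro i; rw [MvPolynomial.aeval_X]; simp [hφfun]
    rw [Finset.prod_congr rfl (fun i _ => this i), Finset.prod_const]
    rfl
  rw [muIdentity] at h
  have hφ := congrArg (MvPolynomial.aeval φfun) h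
  rw [map_mul, map_sub, h1, h2 Even _, h2 Odd _] at hφ
  rw [show (∏ S ∈ Finset.univ.powerset.filter (fun S : Finset (Fin n) => Even S.card),
          ((1 : StmtAux.BB) - PowerSeries.X * StmtAux.TT ^ S.card))
        = StmtAux.Ev (Finset.univ : Finset (Fin n)) from rfl,
      show (∏ S ∈ Finset.univ.powerset.filter (fun S : Finset (Fin n) => Odd S.card),
          ((1 : StmtAux.BB) - PowerSeries.X * StmtAux.TT ^ S.card))
        = StmtAux.Od (Finset.univ : Finset (Fin n)) from rfl] at hφ
  have hmul : MvPolynomial.aeval φfun μ * StmtAux.UU ^ n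
      = (StmtAux.iot (StmtAux.ww n) + StmtAux.UU * g) * StmtAux.UU ^ n := by
    rw [hφ, hD]; ring
  have hμ : MvPolynomial.aeval φfun μ = StmtAux.iot (StmtAux.ww n) + StmtAux.UU * g :=
    mul_right_cancel₀ (pow_ne_zero _ StmtAux.UU_ne_zero) hmul
  have hfinal : StmtAux.pii (MvPolynomial.aeval φfun μ) = nu n := by
    rw [hμ, map_add, StmtAux.pii_iot, map_mul, StmtAux.pii_UU, zero_mul, add_zero, StmtAux.ww,
      if_neg (by omega : ¬ n = 0)]
  rw [← hfinal]
  clear hfinal hμ hmul hφ h hD h1 h2 hE hO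
  induction μ using MvPolynomial.induction_on with
  | C a => simp [hφfun]
  | add p q hp hq => rw [map_add, map_add, map_add, hp, hq]
  | mul_X p i hp =>
      rw [map_mul, map_mul, map_mul, hp]
      congr 1
      rw [MvPolynomial.aeval_X, MvPolynomial.aeval_X]
      cases i with
      | none => exact StmtAux.pii_X.symm
      | some j => exact StmtAux.pii_TT.symm
end
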